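/- A comonotonic, permutation-invariant coherent risk estimator ρ̂ : ℝⁿ → ℝ admits a representation ρ̂(x) = ⟨a, −s(x)⟩ for a unique probability vector a with nonincreasing coordinates a₁ ≥ … ≥ aₙ. -/

import Mathlib

open Finset

/-- `sortVec x` is the nondecreasing rearrangement of `x`. -/
noncomputable def sortVec {n : ℕ} (x : Fin n → ℝ) : Fin n → ℝ := x ∘ Tuple.sort x

/-!
Write `r k = ρ(stepVec n k)` for the indicator vectors of `{i | k ≤ i}`. Comonotonic additivity and
positive homogeneity make `ρ` additive and positively homogeneous on the cone of nondecreasing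
vectors, and every nondecreasing vector is a nonnegative combination of step vectors plus a
constant; so `ρ x = ⟨a, -x⟩` on that cone with `a i = r (i + 1) - r i`, and everywhere by law
invariance. Monotonicity of `ρ` gives `a ≥ 0` and cash additivity `∑ a = r n - r 0 = 1`. The
weights decrease because `r` is concave: `stepVec k + stepVec (k + 2)` is the sum of
`stepVec (k + 1)` and its image under the transposition of `k` and `k + 1`, so comonotonic
additivity, subadditivity and permutation invariance give `r k + r (k + 2) ≤ 2 r (k + 1)`.
Uniqueness: evaluating the representation at step vectors recovers the tail sums of `a`.
-/

variable {n : ℕ}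

theorem sortVec_of_monotone {x : Fin n → ℝ} (h : Monotone x) : sortVec x = x := by
  rw [sortVec, Tuple.sort_eq_refl_iff_monotone.2 h]
  rfl

theorem monotone_sortVec (x : Fin n → ℝ) : Monotone (sortVec x) :=
  Tuple.monotone_sort x

theorem sortVec_comp_perm (x : Fin n → ℝ) (σ : Equiv.Perm (Fin n)) :
    sortVec (x ∘ σ) = sortVec x :=
  Tuple.comp_perm_comp_sort_eq_comp_sort

def stepVec (n k : ℕ) : Fin n → ℝ := fun i => if k ≤ (i : ℕ) then 1 else 0

theorem monotone_stepVec (n k : ℕ) : Monotone (stepVec n k) := by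
  intro i j hij
  have : (i : ℕ) ≤ j := hij
  unfold stepVec
  split_ifs <;> first | omega | norm_num

theorem stepVec_succ_le (n k : ℕ) : stepVec n (k + 1) ≤ stepVec n k := by
  intro i
  unfold stepVec
  split_ifs <;> first | omega | norm_num

theorem stepVec_zero : stepVec n 0 = 1 := by
  ext i
  simp [stepVec]

theorem stepVec_of_le {k : ℕ} (h : n ≤ k) : stepVec n k = 0 := by
  ext i
  have : ¬ k ≤ (i : ℕ) := by omega
  simp [stepVec, this]

theorem stepVec_eq_single_add {k : ℕ} (h : k < n) :
    stepVec n k = Pi.single ⟨k, h⟩ 1 + stepVec n (k + 1) := by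
  ext i
  rcases eq_or_ne i ⟨k, h⟩ with rfl | hi
  · simp [stepVec]
  · have : (i : ℕ) ≠ k := fun h' => hi (Fin.ext h')
    simp only [stepVec, Pi.add_apply, Pi.single_apply, hi, if_false, zero_add]
    split_ifs <;> first | omega | rfl

theorem stepVec_add_stepVec_add_two {k : ℕ} (h : k + 1 < n) :
    stepVec n k + stepVec n (k + 2) =
      stepVec n (k + 1) + stepVec n (k + 1) ∘ Equiv.swap ⟨k, by omega⟩ ⟨k + 1, h⟩ := by
  ext i
  simp only [Pi.add_apply, Function.comp_apply, Equiv.swap_apply_def]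
  split_ifs with h₁ h₂ <;> simp only [stepVec, ← Fin.val_eq_val] at * <;>
    split_ifs <;> first | omega | norm_num

def diffWeights (n : ℕ) (r : ℕ → ℝ) : Fin n → ℝ := fun i => r (i + 1) - r i

theorem diffWeights_nonneg {r : ℕ → ℝ} (hr : Monotone r) (i : Fin n) :
    0 ≤ diffWeights n r i :=
  sub_nonneg.2 (hr (Nat.le_succ i))

theorem diffWeights_dotProduct_stepVec (r : ℕ → ℝ) {k : ℕ} (hk : k ≤ n) :
    diffWeights n r ⬝ᵥ stepVec n k = r n - r k := by
  induction hk using Nat.decreasingInduction with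
  | self => simp [stepVec_of_le le_rfl]
  | of_succ k hk ih =>
    rw [stepVec_eq_single_add hk, dotProduct_add, dotProduct_single, ih, diffWeights]
    ring

theorem sum_diffWeights (r : ℕ → ℝ) : ∑ i, diffWeights n r i = r n - r 0 := by
  rw [← dotProduct_one, ← stepVec_zero, diffWeights_dotProduct_stepVec r n.zero_le]

theorem antitone_diffWeights {r : ℕ → ℝ}
    (hr : ∀ k, k + 2 ≤ n → r k + r (k + 2) ≤ 2 * r (k + 1)) : Antitone (diffWeights n r) := by
  rw [antitone_iff_forall_covBy]
  intro i j hij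
  have hj : (j : ℕ) = i + 1 := by simpa [eq_comm] using hij
  have := hr i (by omega)
  simp only [diffWeights, hj]
  linarith

theorem eq_of_dotProduct_stepVec_eq {a b : Fin n → ℝ}
    (h : ∀ k, a ⬝ᵥ stepVec n k = b ⬝ᵥ stepVec n k) : a = b := by
  ext i
  have hcoord (c : Fin n → ℝ) : c i = c ⬝ᵥ stepVec n i - c ⬝ᵥ stepVec n (i + 1) := by
    rw [stepVec_eq_single_add i.isLt, dotProduct_add, dotProduct_single]
    simp
  rw [hcoord a, hcoord b, h, h]

structure IsLinearOnMonotoneCone (f : (Fin n → ℝ) → ℝ) : Prop where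
  map_add : ∀ x y, Monotone x → Monotone y → f (x + y) = f x + f y
  map_smul : ∀ x (l : ℝ), 0 ≤ l → f (l • x) = l * f x

namespace IsLinearOnMonotoneCone

variable {f g : (Fin n → ℝ) → ℝ}

theorem map_zero (hf : IsLinearOnMonotoneCone f) : f 0 = 0 := by
  simpa using hf.map_smul 0 0 le_rfl

theorem map_add_const (hf : IsLinearOnMonotoneCone f) {x : Fin n → ℝ} (hx : Monotone x)
    {c : ℝ} (hc : 0 ≤ c) : f (x + c • 1) = f x + c * f 1 := by
  rw [hf.map_add x _ hx fun _ _ _ => le_rfl, hf.map_smul 1 c hc]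

theorem eq_of_nonneg_of_eq_stepVec (hf : IsLinearOnMonotoneCone f)
    (hg : IsLinearOnMonotoneCone g) (hfg : ∀ k ≤ n, f (stepVec n k) = g (stepVec n k))
    {x : Fin n → ℝ} (hx : Monotone x) (hx₀ : 0 ≤ x) : f x = g x := by
  suffices ∀ m ≤ n, ∀ y : Fin n → ℝ, Monotone y → 0 ≤ y → (∀ i : Fin n, (i : ℕ) < m → y i = 0) →
      f y = g y from this 0 n.zero_le x hx hx₀ fun i hi => absurd hi i.val.not_lt_zero
  intro m hm
  induction hm using Nat.decreasingInduction with
  | self =>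
    intro y _ _ hy
    rw [show y = 0 from funext fun i => hy i i.isLt, hf.map_zero, hg.map_zero]
  | of_succ m hm ih =>
    intro y hy hy₀ hy_zero
    set c := y ⟨m, hm⟩
    -- peel off the bottom layer `c • stepVec n m`; the remainder vanishes below `m + 1`
    set z := y - c • stepVec n m
    have hcy : ∀ i : Fin n, m ≤ (i : ℕ) → c ≤ y i := fun i hi => hy (show ⟨m, hm⟩ ≤ i from hi)
    have hz : ∀ i : Fin n, z i = if m ≤ (i : ℕ) then y i - c else y i := by
      intro i
      simp only [z, stepVec, Pi.sub_apply, Pi.smul_apply, smul_eq_mul]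
      split_ifs <;> ring
    have hz₀ : 0 ≤ z := by
      intro i
      rw [Pi.zero_apply, hz]
      split_ifs with hi
      · linarith [hcy i hi]
      · exact hy₀ i
    have hz_mono : Monotone z := by
      intro i j hij
      by_cases hi : m ≤ (i : ℕ)
      · rw [hz, hz, if_pos hi, if_pos (hi.trans hij)]
        linarith [hy hij]
      · rw [hz, if_neg hi, hy_zero i (by omega)]
        exact hz₀ j
    have hz_zero : ∀ i : Fin n, (i : ℕ) < m + 1 → z i = 0 := by
      intro i hi
      rw [hz]
      split_ifs with him
      · rw [show i = ⟨m, hm⟩ from Fin.ext (show (i : ℕ) = m by omega), sub_self]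
      · exact hy_zero i (by omega)
    have hstep : Monotone (c • stepVec n m) := (monotone_stepVec n m).const_smul (hy₀ _)
    have hyz : y = c • stepVec n m + z := by simp [z]
    rw [hyz, hf.map_add _ _ hstep hz_mono, hg.map_add _ _ hstep hz_mono,
      hf.map_smul _ _ (hy₀ _), hg.map_smul _ _ (hy₀ _), hfg m hm.le, ih z hz_mono hz₀ hz_zero]

theorem eq_of_eq_stepVec (hf : IsLinearOnMonotoneCone f) (hg : IsLinearOnMonotoneCone g)
    (hfg : ∀ k ≤ n, f (stepVec n k) = g (stepVec n k)) {x : Fin n → ℝ} (hx : Monotone x) :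
    f x = g x := by
  set C := ∑ i, |x i|
  have hC : 0 ≤ C := by positivity
  have hxC : Monotone (x + C • 1) := hx.add fun _ _ _ => le_rfl
  have hxC₀ : 0 ≤ x + C • 1 := fun i => by
    have := single_le_sum (fun j _ => abs_nonneg (x j)) (mem_univ i)
    simp only [Pi.add_apply, Pi.smul_apply, Pi.one_apply, smul_eq_mul, mul_one, Pi.zero_apply]
    linarith [neg_abs_le (x i)]
  have key := eq_of_nonneg_of_eq_stepVec hf hg hfg hxC hxC₀
  rw [hf.map_add_const hx hC, hg.map_add_const hx hC, ← stepVec_zero, hfg 0 n.zero_le] at key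
  linarith

end IsLinearOnMonotoneCone

theorem isLinearOnMonotoneCone_dotProduct_neg (a : Fin n → ℝ) :
    IsLinearOnMonotoneCone fun x => a ⬝ᵥ -x where
  map_add x y _ _ := by rw [neg_add, dotProduct_add]
  map_smul x l _ := by rw [← smul_neg, dotProduct_smul, smul_eq_mul]

theorem diffWeights_dotProduct_neg_stepVec {r : ℕ → ℝ} (hr : r n = 0) {k : ℕ} (hk : k ≤ n) :
    diffWeights n r ⬝ᵥ -stepVec n k = r k := by
  rw [dotProduct_neg, diffWeights_dotProduct_stepVec r hk, hr, zero_sub, neg_neg]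

section RiskEstimator

variable (ρ : (Fin n → ℝ) → ℝ)

theorem isLinearOnMonotoneCone_of_comonotone_additive
    (hhom : ∀ (x : Fin n → ℝ) (l : ℝ), 0 ≤ l → ρ (fun i => l * x i) = l * ρ x)
    (hcom : ∀ x y : Fin n → ℝ, (∀ i j : Fin n, 0 ≤ (x i - x j) * (y i - y j)) →
      ρ (x + y) = ρ x + ρ y) :
    IsLinearOnMonotoneCone ρ where
  map_add x y hx hy := hcom x y fun i j => (hx.monovary hy).sub_mul_sub_nonneg j i
  map_smul := hhom

theorem concave_stepVec
    (hsub : ∀ x y : Fin n → ℝ, ρ (x + y) ≤ ρ x + ρ y)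
    (hlaw : ∀ x : Fin n → ℝ, ρ x = ρ (sortVec x))
    (hcom : ∀ x y : Fin n → ℝ, (∀ i j : Fin n, 0 ≤ (x i - x j) * (y i - y j)) →
      ρ (x + y) = ρ x + ρ y)
    {k : ℕ} (hk : k + 2 ≤ n) :
    ρ (stepVec n k) + ρ (stepVec n (k + 2)) ≤ 2 * ρ (stepVec n (k + 1)) := by
  have hperm (x : Fin n → ℝ) (σ : Equiv.Perm (Fin n)) : ρ (x ∘ σ) = ρ x := by
    rw [hlaw, sortVec_comp_perm, ← hlaw]
  have hstep (k : ℕ) := monotone_stepVec n k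
  calc ρ (stepVec n k) + ρ (stepVec n (k + 2))
      = ρ (stepVec n k + stepVec n (k + 2)) :=
        (hcom _ _ fun i j => ((hstep k).monovary (hstep (k + 2))).sub_mul_sub_nonneg j i).symm
    _ ≤ ρ (stepVec n (k + 1)) + ρ (stepVec n (k + 1) ∘ _) := by
        rw [stepVec_add_stepVec_add_two (by omega)]
        exact hsub _ _
    _ = 2 * ρ (stepVec n (k + 1)) := by rw [hperm, two_mul]

end RiskEstimator

theorem comonotonic_CRE_representation_general {n : ℕ}
    (ρ : (Fin n → ℝ) → ℝ)
    (hmono : ∀ x y : Fin n → ℝ, (∀ i, y i ≤ x i) → ρ x ≤ ρ y)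
    (hcash : ∀ (x : Fin n → ℝ) (m : ℝ), ρ (fun i => x i + m) = ρ x - m)
    (hhom : ∀ (x : Fin n → ℝ) (l : ℝ), 0 ≤ l → ρ (fun i => l * x i) = l * ρ x)
    (hsub : ∀ x y : Fin n → ℝ, ρ (x + y) ≤ ρ x + ρ y)
    (hlaw : ∀ x : Fin n → ℝ, ρ x = ρ (sortVec x))
    (hcom : ∀ x y : Fin n → ℝ, (∀ i j : Fin n, 0 ≤ (x i - x j) * (y i - y j)) →
      ρ (x + y) = ρ x + ρ y) :
    ∃! a : Fin n → ℝ,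
      ((∀ i, 0 ≤ a i) ∧ (∑ i, a i = 1) ∧ (∀ i j : Fin n, i ≤ j → a j ≤ a i)) ∧
      ∀ x : Fin n → ℝ, ρ x = ∑ i, a i * (-(sortVec x i)) := by
  set r : ℕ → ℝ := fun k => ρ (stepVec n k)
  have hρ := isLinearOnMonotoneCone_of_comonotone_additive ρ hhom hcom
  have hr_top : r n = 0 := by simp only [r, stepVec_of_le le_rfl, hρ.map_zero]
  have hr_zero : r 0 = -1 := by
    have h := hcash 0 1
    simp only [Pi.zero_apply, zero_add, hρ.map_zero, zero_sub] at h
    simp only [r, stepVec_zero]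
    exact h
  have hrep (x : Fin n → ℝ) (hx : Monotone x) : ρ x = diffWeights n r ⬝ᵥ -x :=
    hρ.eq_of_eq_stepVec (isLinearOnMonotoneCone_dotProduct_neg _)
      (fun k hk => (diffWeights_dotProduct_neg_stepVec hr_top hk).symm) hx
  refine ⟨diffWeights n r, ⟨⟨diffWeights_nonneg ?_, ?_, ?_⟩, fun x => ?_⟩, ?_⟩
  · exact monotone_nat_of_le_succ fun k => hmono _ _ (stepVec_succ_le n k)
  · rw [sum_diffWeights, hr_top, hr_zero, sub_neg_eq_add, zero_add]
  · exact fun i j hij => antitone_diffWeights (fun k => concave_stepVec ρ hsub hlaw hcom) hij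
  · rw [hlaw x]
    exact hrep _ (monotone_sortVec x)
  · rintro b ⟨-, hb⟩
    refine (eq_of_dotProduct_stepVec_eq fun k => neg_inj.1 ?_).symm
    have hk := hb (stepVec n k)
    rw [sortVec_of_monotone (monotone_stepVec n k), hrep _ (monotone_stepVec n k)] at hk
    rw [← dotProduct_neg, ← dotProduct_neg]
    exact hk

/-- A comonotonic, permutation-invariant coherent risk estimator admits a
representation `ρ̂(x) = ⟨a, -s(x)⟩` for a unique probability vector `a` with
nonincreasing coordinates. -/
theorem comonotonic_CRE_representation {n : ℕ} (hn : 1 ≤ n)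
    (ρ : (Fin n → ℝ) → ℝ)
    (hmono : ∀ x y : Fin n → ℝ, (∀ i, y i ≤ x i) → ρ x ≤ ρ y)
    (hcash : ∀ (x : Fin n → ℝ) (m : ℝ), ρ (fun i => x i + m) = ρ x - m)
    (hhom : ∀ (x : Fin n → ℝ) (l : ℝ), 0 ≤ l → ρ (fun i => l * x i) = l * ρ x)
    (hsub : ∀ x y : Fin n → ℝ, ρ (x + y) ≤ ρ x + ρ y)
    (hlaw : ∀ x : Fin n → ℝ, ρ x = ρ (sortVec x))
    (hcom : ∀ x y : Fin n → ℝ, (∀ i j : Fin n, 0 ≤ (x i - x j) * (y i - y j)) →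
      ρ (x + y) = ρ x + ρ y) :
    ∃! a : Fin n → ℝ,
      ((∀ i, 0 ≤ a i) ∧ (∑ i, a i = 1) ∧ (∀ i j : Fin n, i ≤ j → a j ≤ a i)) ∧
      ∀ x : Fin n → ℝ, ρ x = ∑ i, a i * (-(sortVec x i)) :=
  comonotonic_CRE_representation_general ρ hmono hcash hhom hsub hlaw hcom
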